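/- For every θ > 0 and δ > 0 there exists a constant C = C(θ, δ) with the following property. For every integer n ≥ 1, all real numbers x_1, …, x_n, and every z ∈ ℂ with |Im z| ≥ δ, writing m = (1/n)·∑_{j=1}^{n} 1/(x_j/(θn) − z), m' = (1/n)·∑_{j=1}^{n} 1/(x_j/(θn) − z)², and m'' = (2/n)·∑_{j=1}^{n} 1/(x_j/(θn) − z)³, one has | ∏_{j=1}^{n} (1 + (1/n)·1/(z − x_j/(θn))) − ∏_{j=1}^{n} (1 + (1/n)·1/((z − 1/(θn)) − x_j/(θn))) − e^{−m}·( −m'/(θn) + (1/2 − 1/(2θ))·(m'² − m'')/(θn²) ) | ≤ C/n³. -/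

import Mathlib

open Complex Finset

set_option maxHeartbeats 1000000

private lemma aux_logTaylor3 (v : ℂ) : Complex.logTaylor 3 v = v - v^2/2 := by
  simp [Complex.logTaylor, Finset.sum_range_succ]
  ring

private lemma aux_logTaylor4 (v : ℂ) : Complex.logTaylor 4 v = v - v^2/2 + v^3/3 := by
  simp [Complex.logTaylor, Finset.sum_range_succ]
  ring

private lemma aux_log3 {v : ℂ} (hv : ‖v‖ ≤ 1/2) :
    ‖Complex.log (1+v) - (v - v^2/2)‖ ≤ 2/3 * ‖v‖^3 := by
  have h1 : ‖v‖ < 1 := lt_of_le_of_lt hv (by norm_num)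
  have h3 : (0:ℝ) ≤ ‖v‖^3 := by positivity
  have h2 : (1 - ‖v‖)⁻¹ ≤ 2 := by
    rw [inv_le_comm₀ (by linarith) (by norm_num)]
    linarith
  have := Complex.norm_log_sub_logTaylor_le 2 h1
  rw [aux_logTaylor3] at this
  refine this.trans ?_
  push_cast
  nlinarith [mul_le_mul_of_nonneg_left h2 h3]

private lemma aux_log4 {v : ℂ} (hv : ‖v‖ ≤ 1/2) :
    ‖Complex.log (1+v) - (v - v^2/2 + v^3/3)‖ ≤ 1/2 * ‖v‖^4 := by
  have h1 : ‖v‖ < 1 := lt_of_le_of_lt hv (by norm_num)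
  have h3 : (0:ℝ) ≤ ‖v‖^4 := by positivity
  have h2 : (1 - ‖v‖)⁻¹ ≤ 2 := by
    rw [inv_le_comm₀ (by linarith) (by norm_num)]
    linarith
  have := Complex.norm_log_sub_logTaylor_le 3 h1
  rw [aux_logTaylor4] at this
  refine this.trans ?_
  push_cast
  nlinarith [mul_le_mul_of_nonneg_left h2 h3]

private lemma aux_exp2 {x : ℂ} (hx : ‖x‖ ≤ 1) : ‖Complex.exp x - (1 + x)‖ ≤ 3/4 * ‖x‖^2 := by
  have := Complex.exp_bound (x := x) (by exact hx) (by norm_num : 0 < 2)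
  have hsum : ∑ m ∈ Finset.range 2, x^m/(m.factorial:ℂ) = 1 + x := by
    simp [Finset.sum_range_succ]
  rw [hsum] at this
  refine this.trans (le_of_eq ?_)
  norm_num [Nat.factorial]
  ring

private lemma aux_exp3 {x : ℂ} (hx : ‖x‖ ≤ 1) :
    ‖Complex.exp x - (1 + x + x^2/2)‖ ≤ 2/9 * ‖x‖^3 := by
  have := Complex.exp_bound (x := x) (by exact hx) (by norm_num : 0 < 3)
  have hsum : ∑ m ∈ Finset.range 3, x^m/(m.factorial:ℂ) = 1 + x + x^2/2 := by
    simp [Finset.sum_range_succ]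
  rw [hsum] at this
  refine this.trans (le_of_eq ?_)
  norm_num [Nat.factorial]
  ring

private lemma aux_inv_neg (u v : ℂ) (h : u = -v) : 1/u = -(1/v) := by
  rw [h, one_div, inv_neg, one_div]

private lemma aux_inv_odd (u v : ℂ) (h : u = -v) : 1/u^3 = -(1/v^3) := by
  have h3 : u^3 = -(v^3) := by rw [h]; ring
  rw [h3, one_div, inv_neg, one_div]

private lemma aux_sum_bound {n : ℕ} (f : Fin n → ℂ) (c : ℝ) (h : ∀ j, ‖f j‖ ≤ c) :
    ‖∑ j : Fin n, f j‖ ≤ n * c := by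
  calc ‖∑ j : Fin n, f j‖ ≤ ∑ j : Fin n, ‖f j‖ := norm_sum_le _ _
    _ ≤ (Finset.univ : Finset (Fin n)).card • c :=
        Finset.sum_le_card_nsmul _ _ _ (fun j _ => h j)
    _ = n * c := by simp [nsmul_eq_mul]

private lemma aux_perj (t ε w w' : ℂ) (hw : w ≠ 0) (hw' : w' ≠ 0) (h : w' = w - ε) :
    (t*(1/w') - (t*(1/w'))^2/2 + (t*(1/w'))^3/3) - (t*(1/w) - (t*(1/w))^2/2 + (t*(1/w))^3/3)
      - (t*ε/w^2 + (t*ε^2 - t^2*ε)/w^3)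
    = t*(ε^3/(w^3*w')) - t^2/2*(3*ε^2/(w^2*w'^2) - 2*ε^3/(w^3*w'^2))
      + t^3/3*(ε/(w*w'^3) + ε/(w^2*w'^2) + ε/(w^3*w')) := by
  have hε : ε = w - w' := by rw [h]; ring
  subst hε; clear h
  have e1 : 1/w' - 1/w - (w-w')/w^2 - (w-w')^2/w^3 = (w-w')^3/(w^3*w') := by
    field_simp
  have e2 : 1/w'^2 - 1/w^2 - 2*(w-w')/w^3 = 3*(w-w')^2/(w^2*w'^2) - 2*(w-w')^3/(w^3*w'^2) := by
    field_simp; ring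
  have e3 : 1/w'^3 - 1/w^3 = (w-w')/(w*w'^3) + (w-w')/(w^2*w'^2) + (w-w')/(w^3*w') := by
    have h1 : w*w'^3 ≠ 0 := by simp [hw, hw']
    have h2 : w^2*w'^2 ≠ 0 := by simp [hw, hw']
    have h3 : w^3*w' ≠ 0 := by simp [hw, hw']
    have h4 : w'^3 ≠ 0 := by simp [hw']
    have h5 : w^3 ≠ 0 := by simp [hw]
    rw [div_add_div _ _ h1 h2, div_add_div _ _ (mul_ne_zero h1 h2) h3,
        div_sub_div _ _ h4 h5,
        div_eq_div_iff (mul_ne_zero h4 h5) (mul_ne_zero (mul_ne_zero h1 h2) h3)]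
    ring
  calc (t*(1/w') - (t*(1/w'))^2/2 + (t*(1/w'))^3/3) - (t*(1/w) - (t*(1/w))^2/2 + (t*(1/w))^3/3)
      - (t*(w-w')/w^2 + (t*(w-w')^2 - t^2*(w-w'))/w^3)
      = t*(1/w' - 1/w - (w-w')/w^2 - (w-w')^2/w^3) - t^2/2*(1/w'^2 - 1/w^2 - 2*(w-w')/w^3)
        + t^3/3*(1/w'^3 - 1/w^3) := by ring
    _ = _ := by rw [e1, e2, e3]

/-- pointwise estimate for the difference of logs minus the explicit expansion term. -/
private lemma aux_ptB {δ tR eR : ℝ} (hδ : 0 < δ) {t ε w w' : ℂ}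
    (hw : δ ≤ ‖w‖) (hw' : δ ≤ ‖w'‖) (hrel : w' = w - ε)
    (ht : ‖t‖ = tR) (he : ‖ε‖ = eR)
    (hut : tR*(1/δ) ≤ 1/2) (heδ : eR ≤ δ) :
    ‖(Complex.log (1 + t*(1/w')) - Complex.log (1 + t*(1/w)))
      - (t*ε/w^2 + (t*ε^2 - t^2*ε)/w^3)‖
    ≤ tR^4/δ^4 + tR*eR^3/δ^4 + 5/2*tR^2*eR^2/δ^4 + tR^3*eR/δ^4 := by
  have htR : 0 ≤ tR := ht ▸ norm_nonneg t
  have heR : 0 ≤ eR := he ▸ norm_nonneg ε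
  have hwpos : (0:ℝ) < ‖w‖ := lt_of_lt_of_le hδ hw
  have hw'pos : (0:ℝ) < ‖w'‖ := lt_of_lt_of_le hδ hw'
  have hwne : w ≠ 0 := norm_pos_iff.mp hwpos
  have hw'ne : w' ≠ 0 := norm_pos_iff.mp hw'pos
  have hu : ‖t*(1/w)‖ ≤ tR*(1/δ) := by
    rw [norm_mul, norm_div, norm_one, ht]
    gcongr
  have hu' : ‖t*(1/w')‖ ≤ tR*(1/δ) := by
    rw [norm_mul, norm_div, norm_one, ht]
    gcongr
  have hu2 : ‖t*(1/w)‖ ≤ 1/2 := hu.trans hut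
  have hu2' : ‖t*(1/w')‖ ≤ 1/2 := hu'.trans hut
  have key : (Complex.log (1 + t*(1/w')) - Complex.log (1 + t*(1/w)))
      - (t*ε/w^2 + (t*ε^2 - t^2*ε)/w^3)
      = ((Complex.log (1 + t*(1/w')) - (t*(1/w') - (t*(1/w'))^2/2 + (t*(1/w'))^3/3))
        - (Complex.log (1 + t*(1/w)) - (t*(1/w) - (t*(1/w))^2/2 + (t*(1/w))^3/3)))
        + (t*(ε^3/(w^3*w')) - t^2/2*(3*ε^2/(w^2*w'^2) - 2*ε^3/(w^3*w'^2))
          + t^3/3*(ε/(w*w'^3) + ε/(w^2*w'^2) + ε/(w^3*w'))) := by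
    linear_combination aux_perj t ε w w' hwne hw'ne hrel
  rw [key]
  -- denominators
  have hd31 : δ^4 ≤ ‖w‖^3*‖w'‖ := by
    calc δ^4 = δ^3*δ := by ring
      _ ≤ ‖w‖^3*‖w'‖ := by gcongr
  have hd22 : δ^4 ≤ ‖w‖^2*‖w'‖^2 := by
    calc δ^4 = δ^2*δ^2 := by ring
      _ ≤ ‖w‖^2*‖w'‖^2 := by gcongr
  have hd32 : δ^5 ≤ ‖w‖^3*‖w'‖^2 := by
    calc δ^5 = δ^3*δ^2 := by ring
      _ ≤ ‖w‖^3*‖w'‖^2 := by gcongr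
  have hd13 : δ^4 ≤ ‖w‖*‖w'‖^3 := by
    calc δ^4 = δ*δ^3 := by ring
      _ ≤ ‖w‖*‖w'‖^3 := by gcongr
  -- log remainders
  have hlog' : ‖Complex.log (1 + t*(1/w')) - (t*(1/w') - (t*(1/w'))^2/2 + (t*(1/w'))^3/3)‖
      ≤ 1/2*(tR*(1/δ))^4 := by
    refine (aux_log4 hu2').trans ?_
    gcongr
  have hlog : ‖Complex.log (1 + t*(1/w)) - (t*(1/w) - (t*(1/w))^2/2 + (t*(1/w))^3/3)‖
      ≤ 1/2*(tR*(1/δ))^4 := by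
    refine (aux_log4 hu2).trans ?_
    gcongr
  -- remainder pieces
  have hr1 : ‖t*(ε^3/(w^3*w'))‖ ≤ tR*(eR^3/δ^4) := by
    rw [norm_mul, norm_div, norm_pow, norm_mul, norm_pow, ht, he]
    gcongr
  have hr2 : ‖t^2/2*(3*ε^2/(w^2*w'^2) - 2*ε^3/(w^3*w'^2))‖
      ≤ tR^2/2*(3*eR^2/δ^4 + 2*eR^3/δ^5) := by
    rw [norm_mul]
    have hc : ‖t^2/2‖ = tR^2/2 := by
      rw [norm_div, norm_pow, ht]
      norm_num
    rw [hc]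
    have h1 : ‖3*ε^2/(w^2*w'^2) - 2*ε^3/(w^3*w'^2)‖
        ≤ 3*eR^2/δ^4 + 2*eR^3/δ^5 := by
      refine (norm_sub_le _ _).trans ?_
      have ha : ‖3*ε^2/(w^2*w'^2)‖ ≤ 3*eR^2/δ^4 := by
        rw [norm_div, norm_mul, norm_pow, norm_mul, norm_pow, norm_pow, he]
        have h3 : ‖(3:ℂ)‖ = 3 := by norm_num
        rw [h3]
        gcongr
      have hb : ‖2*ε^3/(w^3*w'^2)‖ ≤ 2*eR^3/δ^5 := by
        rw [norm_div, norm_mul, norm_pow, norm_mul, norm_pow, norm_pow, he]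
        have h2 : ‖(2:ℂ)‖ = 2 := by norm_num
        rw [h2]
        gcongr
      linarith
    exact mul_le_mul_of_nonneg_left h1 (by positivity)
  have hr3 : ‖t^3/3*(ε/(w*w'^3) + ε/(w^2*w'^2) + ε/(w^3*w'))‖
      ≤ tR^3/3*(3*(eR/δ^4)) := by
    rw [norm_mul]
    have hc : ‖t^3/3‖ = tR^3/3 := by
      rw [norm_div, norm_pow, ht]
      norm_num
    have ha : ‖ε/(w*w'^3)‖ ≤ eR/δ^4 := by
      rw [norm_div, norm_mul, norm_pow, he]
      gcongr
    have hb1 : ‖ε/(w^2*w'^2)‖ ≤ eR/δ^4 := by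
      rw [norm_div, norm_mul, norm_pow, norm_pow, he]
      gcongr
    have hb2 : ‖ε/(w^3*w')‖ ≤ eR/δ^4 := by
      rw [norm_div, norm_mul, norm_pow, he]
      gcongr
    have h1 : ‖ε/(w*w'^3) + ε/(w^2*w'^2) + ε/(w^3*w')‖ ≤ 3*(eR/δ^4) := by
      refine (norm_add_le _ _).trans (le_trans (add_le_add (norm_add_le _ _) le_rfl) ?_)
      linarith
    rw [hc]
    exact mul_le_mul_of_nonneg_left h1 (by positivity)
  have hA : ‖(Complex.log (1 + t*(1/w')) - (t*(1/w') - (t*(1/w'))^2/2 + (t*(1/w'))^3/3))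
        - (Complex.log (1 + t*(1/w)) - (t*(1/w) - (t*(1/w))^2/2 + (t*(1/w))^3/3))‖
      ≤ tR^4/δ^4 := by
    refine (norm_sub_le _ _).trans ?_
    have : 1/2*(tR*(1/δ))^4 + 1/2*(tR*(1/δ))^4 = tR^4/δ^4 := by
      field_simp
      ring
    linarith [hlog, hlog']
  have h3 : eR^3/δ^5 ≤ eR^2/δ^4 := by
    rw [div_le_div_iff₀ (by positivity) (by positivity)]
    calc eR^3*δ^4 = (eR*δ^4)*eR^2 := by ring
      _ ≤ (δ*δ^4)*eR^2 := by gcongr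
      _ = eR^2*δ^5 := by ring
  have h4 : tR^2/2*(3*eR^2/δ^4 + 2*eR^3/δ^5) ≤ 5/2*tR^2*eR^2/δ^4 := by
    have h5 : 3*eR^2/δ^4 + 2*eR^3/δ^5 ≤ 5*(eR^2/δ^4) := by
      have e2 : 2*eR^3/δ^5 = 2*(eR^3/δ^5) := by ring
      have e6 : 3*eR^2/δ^4 = 3*(eR^2/δ^4) := by ring
      linarith [h3]
    calc tR^2/2*(3*eR^2/δ^4 + 2*eR^3/δ^5) ≤ tR^2/2*(5*(eR^2/δ^4)) :=
          mul_le_mul_of_nonneg_left h5 (by positivity)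
      _ = 5/2*tR^2*eR^2/δ^4 := by ring
  have e1 : tR*(eR^3/δ^4) = tR*eR^3/δ^4 := by ring
  have e5 : tR^3/3*(3*(eR/δ^4)) = tR^3*eR/δ^4 := by ring
  have hB : ‖t*(ε^3/(w^3*w')) - t^2/2*(3*ε^2/(w^2*w'^2) - 2*ε^3/(w^3*w'^2))
      + t^3/3*(ε/(w*w'^3) + ε/(w^2*w'^2) + ε/(w^3*w'))‖
      ≤ tR*eR^3/δ^4 + 5/2*tR^2*eR^2/δ^4 + tR^3*eR/δ^4 := by
    refine (norm_add_le _ _).trans (le_trans (add_le_add (norm_sub_le _ _) le_rfl) ?_)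
    linarith [hr1, hr2, hr3]
  refine (norm_add_le _ _).trans ?_
  linarith [hA, hB]

private lemma aux_core (θ δ : ℝ) (hθ : 0 < θ) (hδ : 0 < δ) :
    ∃ C : ℝ, ∀ n : ℕ, 1 ≤ n → ∀ a : Fin n → ℂ, (∀ j, (a j).im = 0) → ∀ z : ℂ, δ ≤ |z.im| →
      norm
        ((∏ j : Fin n, (1 + (1 / (n : ℂ)) * (1 / (z - a j))))
          - (∏ j : Fin n, (1 + (1 / (n : ℂ)) * (1 / ((z - 1 / ((θ : ℂ) * n)) - a j))))
          - Complex.exp (-((1 / (n : ℂ)) * ∑ j : Fin n, 1 / (a j - z))) *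
            (-((1 / (n : ℂ)) * ∑ j : Fin n, 1 / (a j - z) ^ 2) / ((θ : ℂ) * n)
              + (1 / 2 - 1 / (2 * (θ : ℂ))) *
                (((1 / (n : ℂ)) * ∑ j : Fin n, 1 / (a j - z) ^ 2) ^ 2
                  - (2 / (n : ℂ)) * ∑ j : Fin n, 1 / (a j - z) ^ 3) / ((θ : ℂ) * (n : ℂ) ^ 2)))
      ≤ C / (n : ℝ) ^ 3 := by
  set cs : ℝ := 1/(2*δ^2) + 2/(3*δ^3) with hcs
  set cmu : ℝ := (1/θ + 1/θ^2)/δ^3 with hcmu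
  set cd : ℝ := 1/(θ*δ^2) + cmu with hcd
  set cD : ℝ := (1 + 1/θ^3 + 5/(2*θ^2) + 1/θ)/δ^4 with hcD
  set cC : ℝ := Real.exp (1/δ) * (3/4*cs^2 + 2/(3*δ^3)) with hcC
  set cE : ℝ := 2*Real.exp 1*cD + 2/9*cd^3 with hcE
  set c3 : ℝ := cmu*((1/2+1/θ)/δ^2) + cmu^2/2 + cd^2/(4*δ^2) with hc3
  set eL : ℝ := Real.exp (1/δ + 1/(2*δ^2) + 2/(3*δ^3)) with heL
  set Clarge : ℝ := eL*cE + 3/2*cd*cC + Real.exp (1/δ)*c3 with hClarge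
  set cT : ℝ := (1/δ^2)/θ + (1/2+1/(2*θ))*((1/δ^2)^2+2/δ^3)/θ with hcT
  set Gall : ℝ := 2*Real.exp (1/δ) + Real.exp (1/δ)*cT with hGall
  set K : ℝ := 2/δ + 1/(θ*δ) + cs + cd + cD with hK
  set N0 : ℕ := ⌈K⌉₊ with hN0
  have hcs0 : 0 ≤ cs := by rw [hcs]; positivity
  have hcmu0 : 0 ≤ cmu := by rw [hcmu]; positivity
  have hcd0 : 0 ≤ cd := by rw [hcd, hcmu]; positivity
  have hcD0 : 0 ≤ cD := by rw [hcD]; positivity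
  have hcC0 : 0 ≤ cC := by rw [hcC, hcs]; positivity
  have hcE0 : 0 ≤ cE := by rw [hcE, hcD, hcd, hcmu]; positivity
  have hc30 : 0 ≤ c3 := by rw [hc3, hcmu, hcd]; positivity
  have heL0 : 0 ≤ eL := by rw [heL]; positivity
  have hClarge0 : 0 ≤ Clarge := by positivity
  have hcT0 : 0 ≤ cT := by rw [hcT]; positivity
  have hGall0 : 0 ≤ Gall := by positivity
  clear_value cs cmu cd cD cC cE c3 eL Clarge cT Gall K N0
  refine ⟨Gall*(N0:ℝ)^3 + Clarge, ?_⟩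
  intro n hn a ha z hz
  have hn0 : (0:ℝ) < n := by exact_mod_cast hn
  have hn1 : (1:ℝ) ≤ n := by exact_mod_cast hn
  have hnC : (n:ℂ) ≠ 0 := Nat.cast_ne_zero.mpr (by omega)
  have hθC : (θ:ℂ) ≠ 0 := Complex.ofReal_ne_zero.mpr hθ.ne'
  set tC : ℂ := 1/(n:ℂ) with htC
  set εC : ℂ := 1/((θ:ℂ)*(n:ℂ)) with hεC
  set tR : ℝ := 1/(n:ℝ) with htRd
  set eR : ℝ := 1/(θ*(n:ℝ)) with heRd
  have htR0 : 0 ≤ tR := by rw [htRd]; positivity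
  have heR0 : 0 ≤ eR := by rw [heRd]; positivity
  have hεcast : εC = ((eR:ℝ):ℂ) := by rw [hεC, heRd]; push_cast; ring
  have hnormtC : ‖tC‖ = tR := by rw [htC, htRd, norm_div, norm_one, Complex.norm_natCast]
  have hnormεC : ‖εC‖ = eR := by
    rw [hεcast, Complex.norm_real, Real.norm_of_nonneg heR0]
  clear_value tC εC tR eR
  -- lower bounds on the shifted points
  have hwim : ∀ j, (z - a j).im = z.im := fun j => by
    rw [Complex.sub_im, ha j, sub_zero]
  have hw : ∀ j, δ ≤ ‖z - a j‖ := fun j => by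
    calc δ ≤ |z.im| := hz
      _ = |(z - a j).im| := by rw [hwim j]
      _ ≤ ‖z - a j‖ := Complex.abs_im_le_norm _
      _ = ‖z - a j‖ := rfl
  have hwz : ∀ j, δ ≤ ‖a j - z‖ := fun j => by rw [norm_sub_rev]; exact hw j
  have hw' : ∀ j, δ ≤ ‖(z - εC) - a j‖ := fun j => by
    have him : ((z - εC) - a j).im = z.im := by
      rw [Complex.sub_im, Complex.sub_im, ha j, hεcast, Complex.ofReal_im, sub_zero, sub_zero]
    calc δ ≤ |z.im| := hz
      _ = |((z - εC) - a j).im| := by rw [him]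
      _ ≤ ‖(z - εC) - a j‖ := Complex.abs_im_le_norm _
      _ = ‖(z - εC) - a j‖ := rfl
  have hwne : ∀ j, (z - a j) ≠ 0 := fun j => norm_pos_iff.mp (lt_of_lt_of_le hδ (hw j))
  have hw'ne : ∀ j, ((z - εC) - a j) ≠ 0 := fun j => norm_pos_iff.mp (lt_of_lt_of_le hδ (hw' j))
  -- bounds on the Stieltjes transforms
  set m0 : ℂ := tC * ∑ j : Fin n, 1/(a j - z) with hm0
  set m1 : ℂ := tC * ∑ j : Fin n, 1/(a j - z)^2 with hm1
  set m2 : ℂ := (2/(n:ℂ)) * ∑ j : Fin n, 1/(a j - z)^3 with hm2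
  clear_value m0 m1 m2
  have hinv1 : ∀ j, ‖(1:ℂ)/(a j - z)‖ ≤ 1/δ := fun j => by
    rw [norm_div, norm_one]
    exact one_div_le_one_div_of_le hδ (hwz j)
  have hinv2 : ∀ j, ‖(1:ℂ)/(a j - z)^2‖ ≤ 1/δ^2 := fun j => by
    rw [norm_div, norm_one, norm_pow]
    exact one_div_le_one_div_of_le (by positivity) (by gcongr; exact hwz j)
  have hinv3 : ∀ j, ‖(1:ℂ)/(a j - z)^3‖ ≤ 1/δ^3 := fun j => by
    rw [norm_div, norm_one, norm_pow]
    exact one_div_le_one_div_of_le (by positivity) (by gcongr; exact hwz j)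
  have hm0b : ‖m0‖ ≤ 1/δ := by
    rw [hm0, norm_mul, hnormtC, htRd]
    calc 1/(n:ℝ) * ‖∑ j : Fin n, 1/(a j - z)‖ ≤ 1/(n:ℝ) * ((n:ℝ)*(1/δ)) := by
          gcongr
          exact aux_sum_bound _ _ hinv1
      _ = 1/δ := by field_simp
  have hm1b : ‖m1‖ ≤ 1/δ^2 := by
    rw [hm1, norm_mul, hnormtC, htRd]
    calc 1/(n:ℝ) * ‖∑ j : Fin n, 1/(a j - z)^2‖ ≤ 1/(n:ℝ) * ((n:ℝ)*(1/δ^2)) := by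
          gcongr
          exact aux_sum_bound _ _ hinv2
      _ = 1/δ^2 := by field_simp
  have hm2b : ‖m2‖ ≤ 2/δ^3 := by
    have h2n : ‖(2/(n:ℂ))‖ = 2/(n:ℝ) := by
      rw [norm_div, Complex.norm_natCast]
      norm_num
    rw [hm2, norm_mul, h2n]
    calc 2/(n:ℝ) * ‖∑ j : Fin n, 1/(a j - z)^3‖ ≤ 2/(n:ℝ) * ((n:ℝ)*(1/δ^3)) := by
          gcongr
          exact aux_sum_bound _ _ hinv3
      _ = 2/δ^3 := by field_simp
  have hexpm0 : ‖Complex.exp (-m0)‖ ≤ Real.exp (1/δ) := by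
    rw [Complex.norm_exp]
    apply Real.exp_le_exp.2
    calc (-m0).re ≤ ‖-m0‖ := Complex.re_le_norm _
      _ = ‖m0‖ := by rw [norm_neg]
      _ ≤ 1/δ := hm0b
  -- generic product bound
  have hProd : ∀ (w : Fin n → ℂ), (∀ j, δ ≤ ‖w j‖) →
      ‖∏ j : Fin n, (1 + tC * (1/(w j)))‖ ≤ Real.exp (1/δ) := by
    intro w hwj
    have hterm : ∀ j, ‖1 + tC * (1/(w j))‖ ≤ 1 + 1/((n:ℝ)*δ) := by
      intro j
      calc ‖1 + tC * (1/(w j))‖ ≤ ‖(1:ℂ)‖ + ‖tC * (1/(w j))‖ := norm_add_le _ _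
        _ ≤ 1 + 1/((n:ℝ)*δ) := by
            rw [norm_one, norm_mul, hnormtC]
            have e0 : ‖(1:ℂ)/(w j)‖ = 1/‖w j‖ := by rw [norm_div, norm_one]
            rw [e0, htRd]
            have : 1/(n:ℝ) * (1/‖w j‖) ≤ 1/(n:ℝ) * (1/δ) := by
              gcongr
              exact hwj j
            have e : 1/(n:ℝ) * (1/δ) = 1/((n:ℝ)*δ) := by field_simp
            linarith only [this, e]
    calc ‖∏ j : Fin n, (1 + tC * (1/(w j)))‖ = ∏ j : Fin n, ‖1 + tC * (1/(w j))‖ :=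
          norm_prod _ _
      _ ≤ ∏ _j : Fin n, (1 + 1/((n:ℝ)*δ)) := by
          refine Finset.prod_le_prod (fun j _ => norm_nonneg _) (fun j _ => hterm j)
      _ = (1 + 1/((n:ℝ)*δ))^n := by rw [Finset.prod_const, Finset.card_univ, Fintype.card_fin]
      _ ≤ (Real.exp (1/((n:ℝ)*δ)))^n := by
          refine pow_le_pow_left₀ (by positivity) ?_ n
          rw [add_comm]
          exact Real.add_one_le_exp _
      _ = Real.exp ((n:ℝ)*(1/((n:ℝ)*δ))) := by rw [← Real.exp_nat_mul]
      _ = Real.exp (1/δ) := by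
          congr 1
          field_simp
  have hp1b : ‖∏ j : Fin n, (1 + tC * (1 / (z - a j)))‖ ≤ Real.exp (1/δ) :=
    hProd (fun j => z - a j) hw
  have hp2b : ‖∏ j : Fin n, (1 + tC * (1 / ((z - εC) - a j)))‖ ≤ Real.exp (1/δ) :=
    hProd (fun j => (z - εC) - a j) hw'
  -- bound on the explicit drift term
  have hθnn : ‖(θ:ℂ)*(n:ℂ)‖ = θ*(n:ℝ) := by
    rw [norm_mul, Complex.norm_real, Real.norm_of_nonneg hθ.le, Complex.norm_natCast]
  have hθnn2 : ‖(θ:ℂ)*(n:ℂ)^2‖ = θ*(n:ℝ)^2 := by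
    rw [norm_mul, norm_pow, Complex.norm_real, Real.norm_of_nonneg hθ.le, Complex.norm_natCast]
  have hhalf : ‖(1/2 - 1/(2*(θ:ℂ)))‖ ≤ 1/2 + 1/(2*θ) := by
    refine (norm_sub_le _ _).trans ?_
    have e1 : ‖(1:ℂ)/2‖ = 1/2 := by norm_num
    have e2 : ‖(1:ℂ)/(2*(θ:ℂ))‖ = 1/(2*θ) := by
      rw [norm_div, norm_mul, Complex.norm_real, Real.norm_of_nonneg hθ.le]
      norm_num
    rw [e1, e2]
  have hTb : ‖(-m1/((θ:ℂ)*(n:ℂ)) + (1/2 - 1/(2*(θ:ℂ))) * (m1^2 - m2)/((θ:ℂ)*(n:ℂ)^2))‖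
      ≤ cT := by
    refine (norm_add_le _ _).trans ?_
    have h1 : ‖-m1/((θ:ℂ)*(n:ℂ))‖ ≤ (1/δ^2)/θ := by
      rw [norm_div, norm_neg, hθnn]
      calc ‖m1‖/(θ*(n:ℝ)) ≤ (1/δ^2)/(θ*(n:ℝ)) := by gcongr
        _ ≤ (1/δ^2)/(θ*1) := by gcongr
        _ = (1/δ^2)/θ := by rw [mul_one]
    have h2 : ‖(1/2 - 1/(2*(θ:ℂ))) * (m1^2 - m2)/((θ:ℂ)*(n:ℂ)^2)‖
        ≤ (1/2+1/(2*θ))*((1/δ^2)^2+2/δ^3)/θ := by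
      rw [norm_div, norm_mul, hθnn2]
      have hsq : ‖m1^2 - m2‖ ≤ (1/δ^2)^2 + 2/δ^3 := by
        refine (norm_sub_le _ _).trans ?_
        have : ‖m1^2‖ ≤ (1/δ^2)^2 := by
          rw [norm_pow]
          gcongr
        linarith only [this, hm2b]
      have hstep1 : ‖(1/2 - 1/(2*(θ:ℂ)))‖*‖m1^2 - m2‖/(θ*(n:ℝ)^2)
          ≤ (1/2+1/(2*θ))*((1/δ^2)^2+2/δ^3)/(θ*(n:ℝ)^2) :=
        div_le_div₀ (by positivity)
          (mul_le_mul hhalf hsq (norm_nonneg _) (by positivity)) (by positivity) le_rfl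
      have hn2 : (1:ℝ) ≤ (n:ℝ)^2 := by
        calc (1:ℝ) = 1^2 := by norm_num
          _ ≤ (n:ℝ)^2 := by gcongr
      have hstep2 : (1/2+1/(2*θ))*((1/δ^2)^2+2/δ^3)/(θ*(n:ℝ)^2)
          ≤ (1/2+1/(2*θ))*((1/δ^2)^2+2/δ^3)/θ := by
        refine div_le_div_of_nonneg_left (by positivity) (by positivity) ?_
        calc θ = θ*1 := by rw [mul_one]
          _ ≤ θ*(n:ℝ)^2 := by
            exact mul_le_mul_of_nonneg_left hn2 hθ.le
      linarith only [hstep1, hstep2]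
    rw [hcT]
    linarith only [h1, h2]
  -- global crude bound
  have hcrude : ‖(∏ j : Fin n, (1 + tC * (1 / (z - a j))))
          - (∏ j : Fin n, (1 + tC * (1 / ((z - εC) - a j))))
          - Complex.exp (-m0) *
            (-m1/((θ:ℂ)*(n:ℂ)) + (1/2 - 1/(2*(θ:ℂ))) * (m1^2 - m2)/((θ:ℂ)*(n:ℂ)^2))‖
      ≤ Gall := by
    refine (norm_sub_le _ _).trans ?_
    have h3 : ‖Complex.exp (-m0) *
        (-m1/((θ:ℂ)*(n:ℂ)) + (1/2 - 1/(2*(θ:ℂ))) * (m1^2 - m2)/((θ:ℂ)*(n:ℂ)^2))‖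
        ≤ Real.exp (1/δ) * cT := by
      rw [norm_mul]
      exact mul_le_mul hexpm0 hTb (norm_nonneg _) (by positivity)
    have h4 := (norm_sub_le (∏ j : Fin n, (1 + tC * (1 / (z - a j))))
      (∏ j : Fin n, (1 + tC * (1 / ((z - εC) - a j)))))
    rw [hGall]
    linarith only [h3, h4, hp1b, hp2b]
  rcases lt_or_ge n N0 with hsmall | hlarge
  · -- small n : crude bound suffices
    refine le_trans hcrude ?_
    have hnN : (n:ℝ) ≤ (N0:ℝ) := by exact_mod_cast hsmall.le
    have hn3 : (n:ℝ)^3 ≤ (N0:ℝ)^3 := by gcongr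
    have hpos3 : (0:ℝ) < (n:ℝ)^3 := by positivity
    have h1 : Gall ≤ Gall*(N0:ℝ)^3/(n:ℝ)^3 := by
      rw [le_div_iff₀ hpos3]
      exact mul_le_mul_of_nonneg_left hn3 hGall0
    refine h1.trans ?_
    gcongr
    linarith only [hClarge0]
  · -- large n : the real estimate
    have hN0n : (N0:ℝ) ≤ (n:ℝ) := by exact_mod_cast hlarge
    have hKn : K ≤ (n:ℝ) := by
      rw [hN0] at hN0n
      exact (Nat.le_ceil K).trans hN0n
    have hpos1 : (0:ℝ) ≤ 1/(θ*δ) := by positivity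
    have hpos2 : (0:ℝ) ≤ 2/δ := by positivity
    rw [hK] at hKn
    have h2δn : 2/δ ≤ (n:ℝ) := by linarith only [hKn, hpos1, hcs0, hcd0, hcD0]
    have h1θδn : 1/(θ*δ) ≤ (n:ℝ) := by linarith only [hKn, hpos2, hcs0, hcd0, hcD0]
    have hcsn : cs ≤ (n:ℝ) := by linarith only [hKn, hpos1, hpos2, hcd0, hcD0]
    have hcdn : cd ≤ (n:ℝ) := by linarith only [hKn, hpos1, hpos2, hcs0, hcD0]
    have hcDn : cD ≤ (n:ℝ) := by linarith only [hKn, hpos1, hpos2, hcs0, hcd0]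
    have htR1 : tR ≤ 1 := by rw [htRd, div_le_one hn0]; exact hn1
    have hu12 : tR*(1/δ) ≤ 1/2 := by
      have h2 : 2 ≤ (n:ℝ)*δ := by
        rw [div_le_iff₀ hδ] at h2δn
        linarith only [h2δn]
      have e : tR*(1/δ) = 1/((n:ℝ)*δ) := by rw [htRd]; field_simp
      rw [e]
      exact (one_div_le_one_div_of_le (by norm_num) h2).trans (by norm_num)
    have heδ : eR ≤ δ := by
      have h2 : 1 ≤ (n:ℝ)*(θ*δ) := by
        rw [div_le_iff₀ (by positivity)] at h1θδn
        linarith only [h1θδn]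
      rw [heRd, div_le_iff₀ (by positivity)]
      calc (1:ℝ) ≤ (n:ℝ)*(θ*δ) := h2
        _ = δ*(θ*(n:ℝ)) := by ring
    have heRtR : eR = tR*(1/θ) := by rw [heRd, htRd]; ring
    -- norms of the elementary summands
    have huval : ∀ j, ‖tC*(1/(z - a j))‖ ≤ tR*(1/δ) := by
      intro j
      rw [norm_mul, hnormtC, norm_div, norm_one]
      exact mul_le_mul_of_nonneg_left (one_div_le_one_div_of_le hδ (hw j)) htR0
    have hu : ∀ j, ‖tC*(1/(z - a j))‖ ≤ 1/2 := fun j => (huval j).trans hu12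
    have hu'val : ∀ j, ‖tC*(1/((z - εC) - a j))‖ ≤ tR*(1/δ) := by
      intro j
      rw [norm_mul, hnormtC, norm_div, norm_one]
      exact mul_le_mul_of_nonneg_left (one_div_le_one_div_of_le hδ (hw' j)) htR0
    have hu' : ∀ j, ‖tC*(1/((z - εC) - a j))‖ ≤ 1/2 := fun j => (hu'val j).trans hu12
    have hne1 : ∀ j, (1 + tC*(1/(z - a j))) ≠ 0 := by
      intro j h0
      have he : tC*(1/(z - a j)) = -1 := by linear_combination h0
      have h1 := hu j
      rw [he] at h1
      norm_num at h1
    have hne2 : ∀ j, (1 + tC*(1/((z - εC) - a j))) ≠ 0 := by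
      intro j h0
      have he : tC*(1/((z - εC) - a j)) = -1 := by linear_combination h0
      have h1 := hu' j
      rw [he] at h1
      norm_num at h1
    set L : ℂ := ∑ j : Fin n, Complex.log (1 + tC * (1/(z - a j))) with hLdef
    set L' : ℂ := ∑ j : Fin n, Complex.log (1 + tC * (1/((z - εC) - a j))) with hL'def
    have hp1 : ∏ j : Fin n, (1 + tC * (1 / (z - a j))) = Complex.exp L := by
      rw [hLdef, Complex.exp_sum]
      exact Finset.prod_congr rfl fun j _ => (Complex.exp_log (hne1 j)).symm
    have hp2 : ∏ j : Fin n, (1 + tC * (1 / ((z - εC) - a j))) = Complex.exp L' := by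
      rw [hL'def, Complex.exp_sum]
      exact Finset.prod_congr rfl fun j _ => (Complex.exp_log (hne2 j)).symm
    set D : ℂ := L' - L with hDdef
    set d : ℂ := εC*m1 + ((εC*tC - εC^2)/2)*m2 with hddef
    set v : ℂ := L + m0 with hvdef
    clear_value L L' D d v
    -- sum conversions
    have hS0 : m0 = -∑ j : Fin n, tC*(1/(z - a j)) := by
      rw [hm0, Finset.mul_sum, ← Finset.sum_neg_distrib]
      refine Finset.sum_congr rfl fun j _ => ?_
      rw [aux_inv_neg (a j - z) (z - a j) (by ring)]
      ring
    have hS1 : ∑ j : Fin n, (tC*(1/(z - a j)))^2 = tC * m1 := by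
      rw [hm1, Finset.mul_sum, Finset.mul_sum]
      refine Finset.sum_congr rfl fun j _ => ?_
      rw [show (a j - z)^2 = (z - a j)^2 from by ring]
      generalize (z - a j) = y
      ring
    have hdsum : d = ∑ j : Fin n, (tC*εC/(z - a j)^2 + (tC*εC^2 - tC^2*εC)/(z - a j)^3) := by
      rw [hddef, hm1, hm2]
      simp only [Finset.mul_sum]
      rw [← Finset.sum_add_distrib]
      refine Finset.sum_congr rfl fun j _ => ?_
      rw [show (a j - z)^2 = (z - a j)^2 from by ring,
          aux_inv_odd (a j - z) (z - a j) (by ring), htC]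
      generalize (z - a j) = y
      ring
    -- Step A : quadratic expansion of L
    have hρsum : v + (tC/2)*m1 = ∑ j : Fin n,
        (Complex.log (1 + tC*(1/(z - a j)))
          - (tC*(1/(z - a j)) - (tC*(1/(z - a j)))^2/2)) := by
      rw [Finset.sum_sub_distrib, Finset.sum_sub_distrib, ← Finset.sum_div, hS1, ← hLdef, hvdef]
      linear_combination hS0
    have hApt : ∀ j, ‖Complex.log (1 + tC*(1/(z - a j)))
        - (tC*(1/(z - a j)) - (tC*(1/(z - a j)))^2/2)‖ ≤ 2/3*(tR*(1/δ))^3 := by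
      intro j
      refine (aux_log3 (hu j)).trans ?_
      gcongr
      exact huval j
    have hA : ‖v + (tC/2)*m1‖ ≤ 2/(3*δ^3)*tR^2 := by
      rw [hρsum]
      refine (aux_sum_bound _ _ hApt).trans (le_of_eq ?_)
      rw [htRd]
      field_simp
    have hnormtC2 : ‖tC/2‖ = tR/2 := by
      rw [norm_div, hnormtC]
      norm_num
    have hvb : ‖v‖ ≤ cs*tR := by
      have hve : v = (v + (tC/2)*m1) - (tC/2)*m1 := by ring
      have h1 : ‖v‖ ≤ ‖v + (tC/2)*m1‖ + ‖(tC/2)*m1‖ := by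
        rw [hve]
        exact (norm_sub_le _ _).trans (by rw [← hve])
      have h2 : ‖(tC/2)*m1‖ ≤ (tR/2)*(1/δ^2) := by
        rw [norm_mul, hnormtC2]
        exact mul_le_mul_of_nonneg_left hm1b (div_nonneg htR0 (by norm_num))
      have h3 : 2/(3*δ^3)*tR^2 ≤ 2/(3*δ^3)*tR := by
        have h4 : tR^2 ≤ tR := pow_le_of_le_one htR0 htR1 (by norm_num)
        exact mul_le_mul_of_nonneg_left h4 (by positivity)
      have he : cs*tR = 2/(3*δ^3)*tR + (tR/2)*(1/δ^2) := by rw [hcs]; ring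
      rw [he]
      linarith only [h1, h2, h3, hA]
    have hv1 : ‖v‖ ≤ 1 := by
      refine hvb.trans ?_
      rw [htRd, mul_one_div, div_le_one hn0]
      exact hcsn
    -- Step C : exp L ≈ exp(-m0) (1 - (t/2) m1)
    have hexpLv : Complex.exp L = Complex.exp (-m0) * Complex.exp v := by
      rw [← Complex.exp_add]
      congr 1
      rw [hvdef]
      ring
    have hCid : Complex.exp L - Complex.exp (-m0)*(1 - (tC/2)*m1)
        = Complex.exp (-m0) * ((Complex.exp v - (1+v)) + (v + (tC/2)*m1)) := by
      rw [hexpLv]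
      ring
    have hCb : ‖Complex.exp L - Complex.exp (-m0)*(1 - (tC/2)*m1)‖ ≤ cC*tR^2 := by
      rw [hCid, norm_mul]
      have hin : ‖(Complex.exp v - (1+v)) + (v + (tC/2)*m1)‖
          ≤ 3/4*(cs*tR)^2 + 2/(3*δ^3)*tR^2 := by
        refine (norm_add_le _ _).trans ?_
        have h1 := aux_exp2 hv1
        have h2 : 3/4*‖v‖^2 ≤ 3/4*(cs*tR)^2 := by
          gcongr
        linarith only [h1, h2, hA]
      calc ‖Complex.exp (-m0)‖ * ‖(Complex.exp v - (1+v)) + (v + (tC/2)*m1)‖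
          ≤ Real.exp (1/δ) * (3/4*(cs*tR)^2 + 2/(3*δ^3)*tR^2) :=
            mul_le_mul hexpm0 hin (norm_nonneg _) (by positivity)
        _ = cC*tR^2 := by rw [hcC]; ring
    -- Step B : D ≈ d
    have hBpt : ∀ j, ‖(Complex.log (1 + tC*(1/((z - εC) - a j)))
          - Complex.log (1 + tC*(1/(z - a j))))
          - (tC*εC/(z - a j)^2 + (tC*εC^2 - tC^2*εC)/(z - a j)^3)‖
        ≤ tR^4/δ^4 + tR*eR^3/δ^4 + 5/2*tR^2*eR^2/δ^4 + tR^3*eR/δ^4 :=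
      fun j => aux_ptB hδ (hw j) (hw' j) (by ring) hnormtC hnormεC hu12 heδ
    have hDd : ∑ j : Fin n, ((Complex.log (1 + tC*(1/((z - εC) - a j)))
          - Complex.log (1 + tC*(1/(z - a j))))
          - (tC*εC/(z - a j)^2 + (tC*εC^2 - tC^2*εC)/(z - a j)^3)) = D - d := by
      rw [Finset.sum_sub_distrib, Finset.sum_sub_distrib, ← hL'def, ← hLdef, ← hdsum, hDdef]
    have hDdb : ‖D - d‖ ≤ cD*tR^3 := by
      rw [← hDd]
      refine (aux_sum_bound _ _ hBpt).trans (le_of_eq ?_)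
      rw [hcD, htRd, heRd]
      field_simp
    have hμb : ‖((εC*tC - εC^2)/2)*m2‖ ≤ cmu*tR^2 := by
      rw [norm_mul]
      have hc : ‖(εC*tC - εC^2)/2‖ ≤ (eR*tR + eR^2)/2 := by
        rw [norm_div]
        have h1 : ‖εC*tC - εC^2‖ ≤ eR*tR + eR^2 := by
          refine (norm_sub_le _ _).trans ?_
          rw [norm_mul, norm_pow, hnormεC, hnormtC]
        have h2 : ‖(2:ℂ)‖ = 2 := by norm_num
        rw [h2]
        linarith only [h1]
      calc ‖(εC*tC - εC^2)/2‖ * ‖m2‖ ≤ ((eR*tR + eR^2)/2) * (2/δ^3) :=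
            mul_le_mul hc hm2b (norm_nonneg _)
              (div_nonneg (add_nonneg (mul_nonneg heR0 htR0) (pow_nonneg heR0 2)) (by norm_num))
        _ = cmu*tR^2 := by rw [hcmu, heRtR]; ring
    have hdb : ‖d‖ ≤ cd*tR := by
      rw [hddef]
      refine (norm_add_le _ _).trans ?_
      have h1 : ‖εC*m1‖ ≤ eR*(1/δ^2) := by
        rw [norm_mul, hnormεC]
        exact mul_le_mul_of_nonneg_left hm1b heR0
      have e1 : eR*(1/δ^2) = 1/(θ*δ^2)*tR := by rw [heRtR]; ring
      have h3 : cmu*tR^2 ≤ cmu*tR := by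
        have h4 : tR^2 ≤ tR := pow_le_of_le_one htR0 htR1 (by norm_num)
        exact mul_le_mul_of_nonneg_left h4 hcmu0
      have he : cd*tR = 1/(θ*δ^2)*tR + cmu*tR := by rw [hcd]; ring
      rw [he]
      linarith only [h1, e1, h3, hμb]
    have hd1 : ‖d‖ ≤ 1 := by
      refine hdb.trans ?_
      rw [htRd, mul_one_div, div_le_one hn0]
      exact hcdn
    have hDd1 : ‖D - d‖ ≤ 1 := by
      refine hDdb.trans ?_
      have h1 : tR^3 ≤ tR := pow_le_of_le_one htR0 htR1 (by norm_num)
      calc cD*tR^3 ≤ cD*tR := mul_le_mul_of_nonneg_left h1 hcD0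
        _ = cD/(n:ℝ) := by rw [htRd]; ring
        _ ≤ 1 := by rw [div_le_one hn0]; exact hcDn
    -- Step D : 1 - exp D ≈ -d - d²/2
    have hexpd : ‖Complex.exp d‖ ≤ Real.exp 1 := by
      rw [Complex.norm_exp]
      apply Real.exp_le_exp.2
      calc d.re ≤ ‖d‖ := Complex.re_le_norm d
        _ = ‖d‖ := rfl
        _ ≤ 1 := hd1
    have hstepD : ‖(1 - Complex.exp D) - (-d - d^2/2)‖ ≤ cE*tR^3 := by
      have hid : (1 - Complex.exp D) - (-d - d^2/2)
          = (Complex.exp d - Complex.exp D) + ((1 + d + d^2/2) - Complex.exp d) := by ring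
      rw [hid]
      refine (norm_add_le _ _).trans ?_
      have h1 : ‖Complex.exp d - Complex.exp D‖ ≤ Real.exp 1 * (2*(cD*tR^3)) := by
        have hDexp : Complex.exp D = Complex.exp d * Complex.exp (D - d) := by
          rw [← Complex.exp_add]
          congr 1
          ring
        rw [hDexp, show Complex.exp d - Complex.exp d * Complex.exp (D-d)
            = Complex.exp d * (1 - Complex.exp (D-d)) from by ring, norm_mul]
        have h2 : ‖1 - Complex.exp (D - d)‖ ≤ 2*(cD*tR^3) := by
          rw [norm_sub_rev]
          have h3 := Complex.norm_exp_sub_one_le (x := D - d)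
            (by exact hDd1)
          calc ‖Complex.exp (D - d) - 1‖ ≤ 2*‖D - d‖ := h3
            _ ≤ 2*(cD*tR^3) := by linarith only [hDdb]
        exact mul_le_mul hexpd h2 (norm_nonneg _) (by positivity)
      have h3 : ‖(1 + d + d^2/2) - Complex.exp d‖ ≤ 2/9*(cd*tR)^3 := by
        rw [norm_sub_rev]
        refine (aux_exp3 hd1).trans ?_
        gcongr
      refine le_trans (add_le_add h1 h3) (le_of_eq ?_)
      rw [hcE]
      ring
    -- Step E : assembly
    have hLb : ‖Complex.exp L‖ ≤ eL := by
      rw [Complex.norm_exp, heL]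
      apply Real.exp_le_exp.2
      have hLeq : L = v - m0 := by rw [hvdef]; ring
      have h1 : L.re ≤ ‖L‖ := by
        calc L.re ≤ ‖L‖ := Complex.re_le_norm L
          _ = ‖L‖ := rfl
      have h2 : ‖L‖ ≤ ‖v‖ + ‖m0‖ := by
        rw [hLeq]
        exact norm_sub_le _ _
      have h3 : cs*tR ≤ cs := by
        calc cs*tR ≤ cs*1 := mul_le_mul_of_nonneg_left htR1 hcs0
          _ = cs := by rw [mul_one]
      have he : 1/δ + 1/(2*δ^2) + 2/(3*δ^3) = 1/δ + cs := by rw [hcs]; ring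
      rw [he]
      linarith only [h1, h2, h3, hvb, hm0b]
    have hT2 : -m1/((θ:ℂ)*(n:ℂ)) + (1/2 - 1/(2*(θ:ℂ))) * (m1^2 - m2)/((θ:ℂ)*(n:ℂ)^2)
        = -(εC*m1) + ((εC*tC - εC^2)/2)*(m1^2 - m2) := by
      rw [hεC, htC]
      ring
    have hLD : Complex.exp L' = Complex.exp L * Complex.exp D := by
      rw [← Complex.exp_add]
      congr 1
      rw [hDdef]
      ring
    have hkey : (∏ j : Fin n, (1 + tC * (1 / (z - a j))))
          - (∏ j : Fin n, (1 + tC * (1 / ((z - εC) - a j))))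
          - Complex.exp (-m0) *
            (-m1/((θ:ℂ)*(n:ℂ)) + (1/2 - 1/(2*(θ:ℂ))) * (m1^2 - m2)/((θ:ℂ)*(n:ℂ)^2))
        = Complex.exp L * ((1 - Complex.exp D) - (-d - d^2/2))
          + (Complex.exp L - Complex.exp (-m0)*(1 - (tC/2)*m1)) * (-d - d^2/2)
          + Complex.exp (-m0) * ((1 - (tC/2)*m1)*(-d - d^2/2)
              - (-(εC*m1) + ((εC*tC - εC^2)/2)*(m1^2 - m2))) := by
      rw [hp1, hp2, hT2, hLD]
      ring
    have hterm3 : (1 - (tC/2)*m1)*(-d - d^2/2)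
          - (-(εC*m1) + ((εC*tC - εC^2)/2)*(m1^2 - m2))
        = (((εC*tC - εC^2)/2)*m2)*((tC/2)*m1 - εC*m1)
          - (((εC*tC - εC^2)/2)*m2)^2/2 + (tC/4)*m1*d^2 := by
      rw [hddef]
      ring
    have ht3b : ‖(1 - (tC/2)*m1)*(-d - d^2/2)
          - (-(εC*m1) + ((εC*tC - εC^2)/2)*(m1^2 - m2))‖ ≤ c3*tR^3 := by
      rw [hterm3]
      have h1 : ‖(((εC*tC - εC^2)/2)*m2)*((tC/2)*m1 - εC*m1)‖
          ≤ (cmu*tR^2)*((tR/2 + eR)*(1/δ^2)) := by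
        rw [norm_mul]
        have h2 : ‖(tC/2)*m1 - εC*m1‖ ≤ (tR/2 + eR)*(1/δ^2) := by
          refine (norm_sub_le _ _).trans ?_
          have h3 : ‖(tC/2)*m1‖ ≤ (tR/2)*(1/δ^2) := by
            rw [norm_mul, hnormtC2]
            exact mul_le_mul_of_nonneg_left hm1b (div_nonneg htR0 (by norm_num))
          have h4 : ‖εC*m1‖ ≤ eR*(1/δ^2) := by
            rw [norm_mul, hnormεC]
            exact mul_le_mul_of_nonneg_left hm1b heR0
          have he : (tR/2 + eR)*(1/δ^2) = (tR/2)*(1/δ^2) + eR*(1/δ^2) := by ring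
          rw [he]
          linarith only [h3, h4]
        exact mul_le_mul hμb h2 (norm_nonneg _) (mul_nonneg hcmu0 (by positivity))
      have h5 : ‖(((εC*tC - εC^2)/2)*m2)^2/2‖ ≤ (cmu*tR^2)^2/2 := by
        have h6 : ‖(2:ℂ)‖ = 2 := by norm_num
        rw [norm_div, norm_pow, h6]
        gcongr
      have h7 : ‖(tC/4)*m1*d^2‖ ≤ (tR/4)*(1/δ^2)*(cd*tR)^2 := by
        rw [norm_mul, norm_mul, norm_pow]
        have h8 : ‖tC/4‖ = tR/4 := by
          rw [norm_div, hnormtC]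
          norm_num
        rw [h8]
        have h9 : ‖d‖^2 ≤ (cd*tR)^2 := by
          gcongr
        exact mul_le_mul (mul_le_mul le_rfl hm1b (norm_nonneg _)
            (div_nonneg htR0 (by norm_num))) h9
          (by positivity) (mul_nonneg (div_nonneg htR0 (by norm_num)) (by positivity))
      have htri : ‖(((εC*tC - εC^2)/2)*m2)*((tC/2)*m1 - εC*m1)
          - (((εC*tC - εC^2)/2)*m2)^2/2 + (tC/4)*m1*d^2‖
          ≤ ‖(((εC*tC - εC^2)/2)*m2)*((tC/2)*m1 - εC*m1)‖
            + ‖(((εC*tC - εC^2)/2)*m2)^2/2‖ + ‖(tC/4)*m1*d^2‖ := by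
        refine (norm_add_le _ _).trans ?_
        have := norm_sub_le ((((εC*tC - εC^2)/2)*m2)*((tC/2)*m1 - εC*m1))
          ((((εC*tC - εC^2)/2)*m2)^2/2)
        linarith only [this]
      -- arithmetic : sum of the three bounds ≤ c3 tR³
      have harith : (cmu*tR^2)*((tR/2 + eR)*(1/δ^2)) + (cmu*tR^2)^2/2
          + (tR/4)*(1/δ^2)*(cd*tR)^2 ≤ c3*tR^3 := by
        have e1 : (cmu*tR^2)*((tR/2 + eR)*(1/δ^2)) = cmu*((1/2+1/θ)/δ^2)*tR^3 := by
          rw [heRtR]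
          ring
        have e2 : (cmu*tR^2)^2/2 = cmu^2/2*(tR^4) := by ring
        have e3 : tR^4 ≤ tR^3 := pow_le_pow_of_le_one htR0 htR1 (by norm_num)
        have e4 : cmu^2/2*(tR^4) ≤ cmu^2/2*tR^3 :=
          mul_le_mul_of_nonneg_left e3 (by positivity)
        have e5 : (tR/4)*(1/δ^2)*(cd*tR)^2 = cd^2/(4*δ^2)*tR^3 := by ring
        have e6 : c3*tR^3 = cmu*((1/2+1/θ)/δ^2)*tR^3 + cmu^2/2*tR^3 + cd^2/(4*δ^2)*tR^3 := by
          rw [hc3]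
          ring
        rw [e6]
        linarith only [e1, e2, e4, e5]
      refine htri.trans ?_
      refine le_trans ?_ harith
      linarith only [h1, h5, h7]
    have hndb : ‖-d - d^2/2‖ ≤ 3/2*(cd*tR) := by
      have h6 : ‖(2:ℂ)‖ = 2 := by norm_num
      have h1 : ‖-d - d^2/2‖ ≤ ‖d‖ + ‖d‖^2/2 := by
        refine (norm_sub_le _ _).trans ?_
        rw [norm_neg, norm_div, norm_pow, h6]
      have h2 : ‖d‖^2 ≤ ‖d‖ := by
        calc ‖d‖^2 = ‖d‖*‖d‖ := by ring
          _ ≤ 1*‖d‖ := mul_le_mul_of_nonneg_right hd1 (norm_nonneg _)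
          _ = ‖d‖ := by rw [one_mul]
      have h3 : ‖d‖ ≤ cd*tR := hdb
      linarith only [h1, h2, h3]
    -- final computation
    have hfin : ‖(∏ j : Fin n, (1 + tC * (1 / (z - a j))))
          - (∏ j : Fin n, (1 + tC * (1 / ((z - εC) - a j))))
          - Complex.exp (-m0) *
            (-m1/((θ:ℂ)*(n:ℂ)) + (1/2 - 1/(2*(θ:ℂ))) * (m1^2 - m2)/((θ:ℂ)*(n:ℂ)^2))‖
        ≤ Clarge/(n:ℝ)^3 := by
      rw [hkey]
      have t1 : ‖Complex.exp L * ((1 - Complex.exp D) - (-d - d^2/2))‖ ≤ eL*(cE*tR^3) := by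
        rw [norm_mul]
        exact mul_le_mul hLb hstepD (norm_nonneg _) heL0
      have t2 : ‖(Complex.exp L - Complex.exp (-m0)*(1 - (tC/2)*m1)) * (-d - d^2/2)‖
          ≤ (cC*tR^2)*(3/2*(cd*tR)) := by
        rw [norm_mul]
        exact mul_le_mul hCb hndb (norm_nonneg _) (mul_nonneg hcC0 (by positivity))
      have t3 : ‖Complex.exp (-m0) * ((1 - (tC/2)*m1)*(-d - d^2/2)
            - (-(εC*m1) + ((εC*tC - εC^2)/2)*(m1^2 - m2)))‖
          ≤ Real.exp (1/δ)*(c3*tR^3) := by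
        rw [norm_mul]
        exact mul_le_mul hexpm0 ht3b (norm_nonneg _) (by positivity)
      have htri : ‖Complex.exp L * ((1 - Complex.exp D) - (-d - d^2/2))
            + (Complex.exp L - Complex.exp (-m0)*(1 - (tC/2)*m1)) * (-d - d^2/2)
            + Complex.exp (-m0) * ((1 - (tC/2)*m1)*(-d - d^2/2)
              - (-(εC*m1) + ((εC*tC - εC^2)/2)*(m1^2 - m2)))‖
          ≤ ‖Complex.exp L * ((1 - Complex.exp D) - (-d - d^2/2))‖
            + ‖(Complex.exp L - Complex.exp (-m0)*(1 - (tC/2)*m1)) * (-d - d^2/2)‖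
            + ‖Complex.exp (-m0) * ((1 - (tC/2)*m1)*(-d - d^2/2)
              - (-(εC*m1) + ((εC*tC - εC^2)/2)*(m1^2 - m2)))‖ := by
        refine (norm_add_le _ _).trans ?_
        have := norm_add_le (Complex.exp L * ((1 - Complex.exp D) - (-d - d^2/2)))
          ((Complex.exp L - Complex.exp (-m0)*(1 - (tC/2)*m1)) * (-d - d^2/2))
        linarith only [this]
      have heq : eL*(cE*tR^3) + (cC*tR^2)*(3/2*(cd*tR)) + Real.exp (1/δ)*(c3*tR^3)
          = Clarge/(n:ℝ)^3 := by
        rw [hClarge, htRd]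
        field_simp
      rw [← heq]
      linarith only [htri, t1, t2, t3]
    refine hfin.trans ?_
    gcongr
    have : (0:ℝ) ≤ Gall*(N0:ℝ)^3 := by positivity
    linarith only [this]

/-- Uniform Taylor expansion (3.12)–(3.14): for every `θ > 0` and `δ > 0` there is a
constant `C` such that for all `n ≥ 1`, reals `x 1, …, x n`, and `z` with `|Im z| ≥ δ`,
writing `m`, `m'`, `m''` for the Stieltjes transform of the empirical measure at `z` and
its first and second derivatives, the difference of the two products in the generator,
minus `e^{−m}(−m'/(θn) + (1/2 − 1/(2θ))(m'² − m'')/(θn²))`, has modulus at most `C/n³`. -/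
theorem stmt17 (θ δ : ℝ) (hθ : 0 < θ) (hδ : 0 < δ) :
    ∃ C : ℝ, ∀ n : ℕ, 1 ≤ n → ∀ x : Fin n → ℝ, ∀ z : ℂ, δ ≤ |z.im| →
      norm
        ((∏ j : Fin n, (1 + (1 / (n : ℂ)) * (1 / (z - (x j : ℂ) / ((θ : ℂ) * n)))))
          - (∏ j : Fin n,
              (1 + (1 / (n : ℂ)) * (1 / ((z - 1 / ((θ : ℂ) * n)) - (x j : ℂ) / ((θ : ℂ) * n)))))
          - Complex.exp (-((1 / (n : ℂ)) * ∑ j : Fin n, 1 / ((x j : ℂ) / ((θ : ℂ) * n) - z))) *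
            (-((1 / (n : ℂ)) * ∑ j : Fin n, 1 / ((x j : ℂ) / ((θ : ℂ) * n) - z) ^ 2)
                / ((θ : ℂ) * n)
              + (1 / 2 - 1 / (2 * (θ : ℂ))) *
                (((1 / (n : ℂ)) * ∑ j : Fin n, 1 / ((x j : ℂ) / ((θ : ℂ) * n) - z) ^ 2) ^ 2
                  - (2 / (n : ℂ)) * ∑ j : Fin n, 1 / ((x j : ℂ) / ((θ : ℂ) * n) - z) ^ 3)
                / ((θ : ℂ) * (n : ℂ) ^ 2)))
      ≤ C / (n : ℝ) ^ 3 := by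
  obtain ⟨C, hC⟩ := aux_core θ δ hθ hδ
  refine ⟨C, fun n hn x z hz => ?_⟩
  have ha : ∀ j : Fin n, (((x j : ℂ) / ((θ:ℂ) * (n:ℂ))).im) = 0 := by
    intro j
    have he : ((x j : ℂ) / ((θ:ℂ) * (n:ℂ))) = (((x j / (θ * n) : ℝ)) : ℂ) := by
      push_cast
      ring
    rw [he, Complex.ofReal_im]
  exact hC n hn (fun j => (x j : ℂ) / ((θ:ℂ) * n)) ha z hz
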